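/- In a DAG G, if two distinct vertices a and b are non-adjacent and b is not an ancestor of a, then the set (pa(a) ∪ pa(b)) \ {a,b} d-separates a and b. -/
import Mathlib


/-- Two vertices are adjacent if there is an edge in either direction. -/
def AdjRel {V : Type*} (E : V → V → Prop) (a b : V) : Prop := E a b ∨ E b a

/-- An internal node at position `i` of a path `f` is a collider if both
neighbouring edges point into it. -/
def IsCollider {V : Type*} (E : V → V → Prop) (f : ℕ → V) (i : ℕ) : Prop :=
  E (f (i - 1)) (f i) ∧ E (f (i + 1)) (f i)

/-- A path `f 0, f 1, …, f n` is blocked by `Z` if some internal node is either a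
non-collider in `Z`, or a collider all of whose descendants (including itself)
lie outside `Z`. -/
def Blocked {V : Type*} (E : V → V → Prop) (Z : Set V) (n : ℕ) (f : ℕ → V) : Prop :=
  ∃ i, 0 < i ∧ i < n ∧
    ((IsCollider E f i ∧ ∀ d, Relation.ReflTransGen E (f i) d → d ∉ Z) ∨
     (¬ IsCollider E f i ∧ f i ∈ Z))

/-- `a` and `b` are d-separated by `Z` if every (simple, undirected) path from `a`
to `b` is blocked by `Z`. -/
def DSep {V : Type*} (E : V → V → Prop) (a b : V) (Z : Set V) : Prop :=
  ∀ (n : ℕ) (f : ℕ → V), 0 < n → f 0 = a → f n = b →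
    (∀ i < n, AdjRel E (f i) (f (i + 1))) →
    (∀ i j, i ≤ n → j ≤ n → f i = f j → i = j) →
    Blocked E Z n f

/-- In a DAG, if `a` and `b` are distinct, non-adjacent, and `b` is not
an ancestor of `a`, then `a` and `b` are d-separated by `(pa(a) ∪ pa(b)) \ {a,b}`. -/
theorem dsep_by_parents {V : Type*} (E : V → V → Prop)
    (hacyc : ∀ a, ¬ Relation.TransGen E a a)
    (a b : V) (hab : a ≠ b)
    (hnadj₁ : ¬ E a b) (hnadj₂ : ¬ E b a)
    (hanc : ¬ Relation.TransGen E b a) :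
    DSep E a b (({x | E x a} ∪ {x | E x b}) \ {a, b}) := by
  intro n f hn hf0 hfn hadj hinj
  set Z : Set V := ({x | E x a} ∪ {x | E x b}) \ {a, b} with hZ
  -- n ≥ 2
  have hn2 : 2 ≤ n := by
    by_contra h
    interval_cases n
    rcases hadj 0 (by norm_num) with h | h
    · exact hnadj₁ (by rwa [hf0, show f (0+1) = b from hfn] at h)
    · exact hnadj₂ (by rwa [hf0, show f (0+1) = b from hfn] at h)
  -- key descending lemma
  have key : ∀ j, j < n → E (f (j + 1)) (f j) → Relation.TransGen E b (f j) →
      Blocked E Z n f := by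
    intro j
    induction j using Nat.strong_induction_on with
    | _ j ih =>
      intro hjn hback hbj
      cases j with
      | zero => exact absurd (hf0 ▸ hbj) hanc
      | succ m =>
        rcases hadj m (by omega) with hfwd | hback2
        · -- collider at m+1
          refine ⟨m + 1, by omega, hjn, Or.inl ⟨⟨by simpa using hfwd, hback⟩, ?_⟩⟩
          intro d hd hdZ
          rcases hdZ.1 with hda | hdb
          · exact hanc (hbj.trans (Relation.TransGen.tail' hd hda))
          · exact hacyc b (hbj.trans (Relation.TransGen.tail' hd hdb))
        · exact ih m (by omega) (by omega) hback2 (hbj.tail hback2)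
  -- direction of last edge
  rcases hadj (n - 1) (by omega) with hlast | hlast
  · -- f (n-1) → b : non-collider in Z
    rw [show n - 1 + 1 = n by omega, hfn] at hlast
    refine ⟨n - 1, by omega, by omega, Or.inr ⟨?_, ?_⟩⟩
    · rintro ⟨-, hc⟩
      rw [show n - 1 + 1 = n by omega, hfn] at hc
      exact hacyc b (Relation.TransGen.head hc (Relation.TransGen.single hlast))
    · refine ⟨Or.inr hlast, ?_⟩
      rintro (h | h)
      · have := hinj (n - 1) 0 (by omega) (by omega) (by rw [h, hf0])
        omega
      · have := hinj (n - 1) n (by omega) le_rfl (by rw [h, hfn])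
        omega
  · -- b → f (n-1)
    rw [show n - 1 + 1 = n by omega, hfn] at hlast
    exact key (n - 1) (by omega) (by rw [show n - 1 + 1 = n by omega, hfn]; exact hlast)
      (Relation.TransGen.single hlast)
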